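/- Suppose (𝒳, S, γ, (Λ_a)_{a∈A}) is a spectral decomposition system for a Euclidean space 𝔥 with {Λ_a : a ∈ A} closed in L(𝒳,𝔥). Let D be a nonempty S-invariant subset of 𝒳 and let X ∈ 𝔥. Then N_L(X; γ⁻¹(D)) = {Λ_a y : y ∈ N_L(γ(X); D), a ∈ A_X}. -/

import Mathlib

open Filter Topology Set Metric
open scoped RealInnerProductSpace

noncomputable section

/-- A spectral decomposition system `(𝒳, S, γ, (Λ_a)_{a ∈ A})` for the space `H`:
`S` acts on `𝒳` by linear isometries (via `act`), `γ : H → 𝒳` is the spectral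
mapping, each `Λ a : 𝒳 → H` is a linear isometry, and the axioms [A], [B], [C] hold,
with `τ` the `S`-invariant ordering mapping of axiom [A]. -/
structure SDS (𝒳 H : Type*) [NormedAddCommGroup 𝒳] [InnerProductSpace ℝ 𝒳]
    [NormedAddCommGroup H] [InnerProductSpace ℝ H]
    (S : Type*) [Group S] (A : Type*) where
  act : S →* (𝒳 ≃ₗᵢ[ℝ] 𝒳)
  γ : H → 𝒳
  Λ : A → 𝒳 →ₗᵢ[ℝ] H
  τ : 𝒳 → 𝒳
  τ_inv : ∀ (s : S) (x : 𝒳), τ (act s x) = τ x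
  τ_orbit : ∀ x : 𝒳, ∃ s : S, τ x = act s x
  γΛ : ∀ (a : A) (x : 𝒳), γ (Λ a x) = τ x
  decomp : ∀ X : H, ∃ a : A, X = Λ a (γ X)
  inner_le : ∀ X Y : H, ⟪X, Y⟫ ≤ ⟪γ X, γ Y⟫

variable {𝒳 H S A : Type*} [NormedAddCommGroup 𝒳] [InnerProductSpace ℝ 𝒳]
    [NormedAddCommGroup H] [InnerProductSpace ℝ H] [Group S]

/-- The set `{Λ_a : a ∈ A}`, regarded as a subset of the space `L(𝒳, H)` of
continuous linear maps with the operator norm. -/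
def SDS.LambdaSet (𝔖 : SDS 𝒳 H S A) : Set (𝒳 →L[ℝ] H) :=
  {L | ∃ a : A, L = (𝔖.Λ a).toContinuousLinearMap}

/-- `A_X = {a ∈ A : X = Λ_a (γ X)}`. -/
def SDS.AX (𝔖 : SDS 𝒳 H S A) (X : H) : Set A := {a | X = 𝔖.Λ a (𝔖.γ X)}

/-- The Fréchet normal cone to `D` at `x`: empty if `x ∉ D`, and otherwise the set of
`y` with `limsup_{z → x, z ∈ D \ {x}} ⟨z - x, y⟩ / ‖z - x‖ ≤ 0`, expressed in ε-δ form. -/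
def fNormal {E : Type*} [NormedAddCommGroup E] [InnerProductSpace ℝ E]
    (D : Set E) (x : E) : Set E :=
  {y | x ∈ D ∧ ∀ ε : ℝ, 0 < ε → ∃ δ : ℝ, 0 < δ ∧
    ∀ z ∈ D, ‖z - x‖ < δ → ⟪z - x, y⟫ ≤ ε * ‖z - x‖}

/-- The limiting normal cone to `D` at `x`: the set of limits `y` of sequences
`y_n ∈ N_F(x_n; D)` with `x_n → x`; empty if `x ∉ D`. -/
def lNormal {E : Type*} [NormedAddCommGroup E] [InnerProductSpace ℝ E]
    (D : Set E) (x : E) : Set E :=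
  {y | x ∈ D ∧ ∃ xn yn : ℕ → E, (∀ n, yn n ∈ fNormal D (xn n)) ∧
    Tendsto xn atTop (𝓝 x) ∧ Tendsto yn atTop (𝓝 y)}

/-! For `⊇`: invariance of `D` and axiom [A] give, for every `w ∈ 𝒳` and `Z ∈ γ⁻¹(D)`, a point
`z ∈ D` with `‖z - w‖ ≤ ‖Z - Λ_a w‖`, because `γ` is 1-Lipschitz by [C]; testing this at
`w = x + t y` transports Fréchet normals through `Λ_a`. For `⊆`: if `Y` is a Fréchet normal at `X`,
then [C] forces `Λ_b γ(X) = X + o(t)` for `b ∈ A_{X + tY}`, and compactness of `{Λ_a}` yields a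
limit `Λ_a` with `a ∈ A_X` and `Y = Λ_a w`, `w` a limit of the quotients `(γ(X + tY) - γ(X)) / t`.
Limiting normals then follow along a subsequence on which `Λ_{a_n}` converges. -/

section FrechetNormal

variable {E F : Type*} [NormedAddCommGroup E] [InnerProductSpace ℝ E]
  [NormedAddCommGroup F] [InnerProductSpace ℝ F]

/- With `‖v‖ = t ε`, the slack `2 t ε ‖u‖ - ‖u‖²` in the expanded squares is at most
`t² ε² = t ε ‖v‖`. -/
theorem inner_le_of_norm_sub_smul_le {u y : E} {v Y : F} {t ε : ℝ} (ht : 0 < t)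
    (hY : ‖Y‖ = ‖y‖) (htε : t * ε = ‖v‖) (hle : ‖u - t • y‖ ≤ ‖v - t • Y‖)
    (hu : ⟪u, y⟫ ≤ ε * ‖u‖) : ⟪v, Y⟫ ≤ ε * ‖v‖ := by
  have hsq : ‖u - t • y‖ ^ 2 ≤ ‖v - t • Y‖ ^ 2 := pow_le_pow_left₀ (norm_nonneg _) hle 2
  rw [norm_sub_sq_real, norm_sub_sq_real, real_inner_smul_right, real_inner_smul_right,
    norm_smul, norm_smul, hY] at hsq
  have htu : t * ⟪u, y⟫ ≤ t * (ε * ‖u‖) := mul_le_mul_of_nonneg_left hu ht.le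
  refine le_of_mul_le_mul_left ?_ ht
  nlinarith [sq_nonneg (‖u‖ - t * ε)]

theorem LinearIsometry.map_mem_fNormal (Λ : E →ₗᵢ[ℝ] F) {D : Set E} {D' : Set F}
    (hD : MapsTo Λ D D') (hnear : ∀ Z ∈ D', ∀ w, ∃ z ∈ D, ‖z - w‖ ≤ ‖Z - Λ w‖)
    {x y : E} (hy : y ∈ fNormal D x) : Λ y ∈ fNormal D' (Λ x) := by
  obtain ⟨hx, hy⟩ := hy
  refine ⟨hD hx, fun ε hε => ?_⟩
  obtain ⟨δ, hδ, hyδ⟩ := hy ε hε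
  have hc : 0 < 1 + 2 * ‖y‖ / ε := by positivity
  refine ⟨δ / (1 + 2 * ‖y‖ / ε), by positivity, fun Z hZ hZx => ?_⟩
  rcases eq_or_ne Z (Λ x) with rfl | hne
  · simp
  set t := ‖Z - Λ x‖ / ε
  have ht : 0 < t := div_pos (norm_pos_iff.mpr (sub_ne_zero.mpr hne)) hε
  have htε : t * ε = ‖Z - Λ x‖ := div_mul_cancel₀ _ hε.ne'
  obtain ⟨z, hz, hzw⟩ := hnear Z hZ (x + t • y)
  have hle : ‖(z - x) - t • y‖ ≤ ‖(Z - Λ x) - t • Λ y‖ := by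
    simpa only [map_add, map_smul, sub_sub] using hzw
  have hzx : ‖z - x‖ < δ := calc
    ‖z - x‖ ≤ ‖(z - x) - t • y‖ + ‖t • y‖ := norm_le_norm_sub_add _ _
    _ ≤ ‖Z - Λ x‖ + ‖t • Λ y‖ + ‖t • y‖ := by gcongr; exact hle.trans (norm_sub_le _ _)
    _ = (1 + 2 * ‖y‖ / ε) * ‖Z - Λ x‖ := by
        rw [norm_smul, norm_smul, Λ.norm_map, Real.norm_of_nonneg ht.le, ← htε]
        field_simp
        ring
    _ < δ := (lt_div_iff₀' hc).mp hZx
  exact inner_le_of_norm_sub_smul_le ht (Λ.norm_map y) htε hle (hyδ z hz hzx)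

theorem LinearIsometry.mem_fNormal_of_map_mem (Λ : E →ₗᵢ[ℝ] F) {D : Set E} {D' : Set F}
    (hD : MapsTo Λ D D') {x y : E} (hx : x ∈ D) (h : Λ y ∈ fNormal D' (Λ x)) :
    y ∈ fNormal D x := by
  refine ⟨hx, fun ε hε => ?_⟩
  obtain ⟨δ, hδ, hδ'⟩ := h.2 ε hε
  refine ⟨δ, hδ, fun z hz hzx => ?_⟩
  have hΛz := hδ' (Λ z) (hD hz) (by rwa [← map_sub, Λ.norm_map])
  rwa [← map_sub, Λ.norm_map, Λ.inner_map_map] at hΛz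

end FrechetNormal

namespace SDS

variable (𝔖 : SDS 𝒳 H S A)

theorem norm_γ (X : H) : ‖𝔖.γ X‖ = ‖X‖ := by
  obtain ⟨a, ha⟩ := 𝔖.decomp X
  conv_rhs => rw [ha]
  exact ((𝔖.Λ a).norm_map _).symm

theorem norm_γ_sub_γ_le (X Y : H) : ‖𝔖.γ X - 𝔖.γ Y‖ ≤ ‖X - Y‖ := by
  have hsq : ‖𝔖.γ X - 𝔖.γ Y‖ ^ 2 ≤ ‖X - Y‖ ^ 2 := by
    rw [norm_sub_sq_real, norm_sub_sq_real, 𝔖.norm_γ, 𝔖.norm_γ]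
    linarith [𝔖.inner_le X Y]
  exact (pow_le_pow_iff_left₀ (norm_nonneg _) (norm_nonneg _) two_ne_zero).mp hsq

theorem continuous_γ : Continuous 𝔖.γ :=
  LipschitzWith.continuous (K := 1) <| LipschitzWith.of_dist_le_mul fun X Y => by
    simpa only [NNReal.coe_one, one_mul, dist_eq_norm] using 𝔖.norm_γ_sub_γ_le X Y

theorem γ_Λ_γ (a : A) (X : H) : 𝔖.γ (𝔖.Λ a (𝔖.γ X)) = 𝔖.γ X := by
  obtain ⟨b, hb⟩ := 𝔖.decomp X
  rw [𝔖.γΛ, ← 𝔖.γΛ b, ← hb]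

theorem mapsTo_Λ {D : Set 𝒳} (hDinv : ∀ (s : S), ∀ x ∈ D, 𝔖.act s x ∈ D) (a : A) :
    MapsTo (𝔖.Λ a) D (𝔖.γ ⁻¹' D) := fun x hx => by
  obtain ⟨s, hs⟩ := 𝔖.τ_orbit x
  show 𝔖.γ (𝔖.Λ a x) ∈ D
  rw [𝔖.γΛ, hs]
  exact hDinv s x hx

theorem exists_mem_norm_sub_le {D : Set 𝒳} (hDinv : ∀ (s : S), ∀ x ∈ D, 𝔖.act s x ∈ D)
    {Z : H} (hZ : 𝔖.γ Z ∈ D) (a : A) (w : 𝒳) : ∃ z ∈ D, ‖z - w‖ ≤ ‖Z - 𝔖.Λ a w‖ := by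
  obtain ⟨s, hs⟩ := 𝔖.τ_orbit w
  refine ⟨𝔖.act s⁻¹ (𝔖.γ Z), hDinv _ _ hZ, ?_⟩
  calc ‖𝔖.act s⁻¹ (𝔖.γ Z) - w‖ = ‖𝔖.γ Z - 𝔖.τ w‖ := by
        rw [hs, ← (𝔖.act s).norm_map, map_sub, map_inv, LinearIsometryEquiv.coe_inv,
          LinearIsometryEquiv.apply_symm_apply]
    _ = ‖𝔖.γ Z - 𝔖.γ (𝔖.Λ a w)‖ := by rw [𝔖.γΛ]
    _ ≤ ‖Z - 𝔖.Λ a w‖ := 𝔖.norm_γ_sub_γ_le _ _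

theorem Λ_mem_fNormal {D : Set 𝒳} (hDinv : ∀ (s : S), ∀ x ∈ D, 𝔖.act s x ∈ D) (a : A)
    {x y : 𝒳} (hy : y ∈ fNormal D x) : 𝔖.Λ a y ∈ fNormal (𝔖.γ ⁻¹' D) (𝔖.Λ a x) :=
  (𝔖.Λ a).map_mem_fNormal (𝔖.mapsTo_Λ hDinv a) (fun _ hZ => 𝔖.exists_mem_norm_sub_le hDinv hZ a) hy

theorem norm_Λ_γ_sub_sq_le {X V : H} {b : A} (hb : V = 𝔖.Λ b (𝔖.γ V)) :
    ‖𝔖.Λ b (𝔖.γ X) - X‖ ^ 2 ≤ 2 * ⟪V - X, 𝔖.Λ b (𝔖.γ X) - X⟫ := by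
  have hnorm : ‖𝔖.Λ b (𝔖.γ X)‖ = ‖X‖ := by rw [(𝔖.Λ b).norm_map, 𝔖.norm_γ]
  have hinner : ⟪V, X⟫ ≤ ⟪V, 𝔖.Λ b (𝔖.γ X)⟫ := by
    calc ⟪V, X⟫ ≤ ⟪𝔖.γ V, 𝔖.γ X⟫ := 𝔖.inner_le V X
      _ = ⟪V, 𝔖.Λ b (𝔖.γ X)⟫ := by
        conv_rhs => rw [hb]
        exact ((𝔖.Λ b).inner_map_map _ _).symm
  rw [norm_sub_sq_real, hnorm, inner_sub_left, inner_sub_right, inner_sub_right,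
    real_inner_self_eq_norm_sq, real_inner_comm X]
  linarith

theorem tendsto_smul_Λ_γ_sub {D : Set 𝒳} {X Y : H} (hY : Y ∈ fNormal (𝔖.γ ⁻¹' D) X)
    {b : ℝ → A} (hb : ∀ t, b t ∈ 𝔖.AX (X + t • Y)) :
    Tendsto (fun t => t⁻¹ • (𝔖.Λ (b t) (𝔖.γ X) - X)) (𝓝[>] 0) (𝓝 0) := by
  rw [Metric.tendsto_nhds]
  intro ε hε
  obtain ⟨δ, hδ, hYδ⟩ := hY.2 (ε / 4) (by positivity)
  have hsmall : ∀ᶠ t in 𝓝[>] (0 : ℝ), 2 * t * ‖Y‖ < δ := by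
    have hlim : Tendsto (fun t : ℝ => 2 * t * ‖Y‖) (𝓝 0) (𝓝 0) := by
      simpa using ((tendsto_id (x := 𝓝 (0 : ℝ))).const_mul 2).mul_const ‖Y‖
    exact (hlim.eventually (gt_mem_nhds hδ)).filter_mono nhdsWithin_le_nhds
  filter_upwards [self_mem_nhdsWithin, hsmall] with t (ht : 0 < t) htδ
  set e := 𝔖.Λ (b t) (𝔖.γ X) - X
  have hsq : ‖e‖ ^ 2 ≤ 2 * t * ⟪Y, e⟫ := by
    simpa only [add_sub_cancel_left, real_inner_smul_left, mul_assoc] using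
      𝔖.norm_Λ_γ_sub_sq_le (X := X) (hb t)
  have hCS : ⟪Y, e⟫ ≤ ‖Y‖ * ‖e‖ := real_inner_le_norm Y e
  have he : ‖e‖ < δ := by nlinarith [norm_nonneg e, norm_nonneg Y]
  have hmem : 𝔖.γ (e + X) ∈ D := by rw [sub_add_cancel, 𝔖.γ_Λ_γ]; exact hY.1
  have hYe : ⟪e, Y⟫ ≤ ε / 4 * ‖e‖ := by simpa using hYδ (e + X) hmem (by simpa using he)
  rw [real_inner_comm] at hYe
  have het : ‖e‖ ≤ t * ε / 2 := by
    by_contra! h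
    have hpos : 0 < ‖e‖ := h.trans' (by positivity)
    nlinarith [mul_lt_mul_of_pos_right h hpos,
      mul_le_mul_of_nonneg_left hYe (by positivity : (0 : ℝ) ≤ 2 * t)]
  rw [dist_zero_right, norm_smul, Real.norm_of_nonneg (inv_nonneg.mpr ht.le),
    inv_mul_lt_iff₀ ht]
  linarith [mul_pos ht hε]

theorem exists_subseq_tendsto [FiniteDimensional ℝ 𝒳] [FiniteDimensional ℝ H]
    (hcl : IsClosed 𝔖.LambdaSet) (an : ℕ → A) {vn : ℕ → 𝒳} {R : ℝ} (hv : ∀ n, ‖vn n‖ ≤ R) :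
    ∃ (a : A) (v : 𝒳) (φ : ℕ → ℕ), StrictMono φ ∧ Tendsto (vn ∘ φ) atTop (𝓝 v) ∧
      ∀ {un : ℕ → 𝒳} {u : 𝒳}, Tendsto un atTop (𝓝 u) →
        Tendsto (fun k => 𝔖.Λ (an (φ k)) (un k)) atTop (𝓝 (𝔖.Λ a u)) := by
  have hbdd : Bornology.IsBounded 𝔖.LambdaSet := isBounded_iff_forall_norm_le.mpr
    ⟨1, by rintro _ ⟨a, rfl⟩; exact (𝔖.Λ a).norm_toContinuousLinearMap_le⟩
  have hK := (Metric.isCompact_of_isClosed_isBounded hcl hbdd).prod (isCompact_closedBall (0 : 𝒳) R)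
  obtain ⟨⟨L, v⟩, ⟨⟨a, rfl⟩, -⟩, φ, hφ, hlim⟩ :=
    hK.tendsto_subseq (x := fun n => ((𝔖.Λ (an n)).toContinuousLinearMap, vn n))
      (fun n => ⟨⟨an n, rfl⟩, mem_closedBall_zero_iff.mpr (hv n)⟩)
  refine ⟨a, v, φ, hφ, (continuous_snd.tendsto _).comp hlim, fun hu => ?_⟩
  exact (isBoundedBilinearMap_apply.continuous.tendsto _).comp
    (((continuous_fst.tendsto _).comp hlim).prodMk_nhds hu)

theorem exists_of_mem_fNormal [FiniteDimensional ℝ 𝒳] [FiniteDimensional ℝ H]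
    (hcl : IsClosed 𝔖.LambdaSet) {D : Set 𝒳} (hDinv : ∀ (s : S), ∀ x ∈ D, 𝔖.act s x ∈ D)
    {X Y : H} (hY : Y ∈ fNormal (𝔖.γ ⁻¹' D) X) :
    ∃ a ∈ 𝔖.AX X, ∃ y ∈ fNormal D (𝔖.γ X), Y = 𝔖.Λ a y := by
  choose b hb using fun t : ℝ => 𝔖.decomp (X + t • Y)
  set t : ℕ → ℝ := fun n => 1 / (n + 1)
  have ht : ∀ n, 0 < t n := fun n => by positivity
  have htlim : Tendsto t atTop (𝓝[>] 0) := tendsto_nhdsWithin_iff.mpr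
    ⟨tendsto_one_div_add_atTop_nhds_zero_nat, Eventually.of_forall ht⟩
  set e : ℕ → H := fun n => (t n)⁻¹ • (𝔖.Λ (b (t n)) (𝔖.γ X) - X)
  have he : Tendsto e atTop (𝓝 0) := (𝔖.tendsto_smul_Λ_γ_sub hY hb).comp htlim
  set w : ℕ → 𝒳 := fun n => (t n)⁻¹ • (𝔖.γ (X + t n • Y) - 𝔖.γ X)
  have hw : ∀ n, ‖w n‖ ≤ ‖Y‖ := fun n => by
    have hγ := 𝔖.norm_γ_sub_γ_le (X + t n • Y) X
    rw [add_sub_cancel_left, norm_smul, Real.norm_of_nonneg (ht n).le] at hγ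
    rw [norm_smul, Real.norm_of_nonneg (inv_nonneg.mpr (ht n).le), inv_mul_le_iff₀ (ht n)]
    exact hγ
  have hΛγ : ∀ n, 𝔖.Λ (b (t n)) (𝔖.γ X) = X + t n • e n := fun n => by
    rw [smul_inv_smul₀ (ht n).ne', add_sub_cancel]
  have hΛw : ∀ n, 𝔖.Λ (b (t n)) (w n) = Y - e n := fun n => by
    rw [map_smul, map_sub, ← hb, smul_sub, smul_add, inv_smul_smul₀ (ht n).ne']
    simp only [e, smul_sub]
    abel
  obtain ⟨a, y, φ, hφ, hy, hΛ⟩ := 𝔖.exists_subseq_tendsto hcl (fun n => b (t n)) hw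
  have haX : 𝔖.Λ a (𝔖.γ X) = X := by
    refine tendsto_nhds_unique (hΛ tendsto_const_nhds) ?_
    have hlim := (tendsto_const_nhds (x := X)).add ((htlim.mono_right nhdsWithin_le_nhds).smul he)
    rw [zero_smul, add_zero] at hlim
    exact (hlim.comp hφ.tendsto_atTop).congr fun k => (hΛγ (φ k)).symm
  have hay : 𝔖.Λ a y = Y := by
    refine tendsto_nhds_unique (hΛ hy) ?_
    have hlim := (tendsto_const_nhds (x := Y)).sub he
    rw [sub_zero] at hlim
    exact (hlim.comp hφ.tendsto_atTop).congr fun k => (hΛw (φ k)).symm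
  refine ⟨a, haX.symm, y, (𝔖.Λ a).mem_fNormal_of_map_mem (𝔖.mapsTo_Λ hDinv a) hY.1 ?_, hay.symm⟩
  rwa [haX, hay]

theorem exists_of_mem_lNormal [FiniteDimensional ℝ 𝒳] [FiniteDimensional ℝ H]
    (hcl : IsClosed 𝔖.LambdaSet) {D : Set 𝒳} (hDinv : ∀ (s : S), ∀ x ∈ D, 𝔖.act s x ∈ D)
    {X Y : H} (hY : Y ∈ lNormal (𝔖.γ ⁻¹' D) X) :
    ∃ y ∈ lNormal D (𝔖.γ X), ∃ a ∈ 𝔖.AX X, Y = 𝔖.Λ a y := by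
  obtain ⟨hX, Xn, Yn, hF, hXn, hYn⟩ := hY
  choose an hanX yn hyn hYeq using fun n => 𝔖.exists_of_mem_fNormal hcl hDinv (hF n)
  obtain ⟨R, hR⟩ := isBounded_iff_forall_norm_le.mp (Metric.isBounded_range_of_tendsto Yn hYn)
  have hyn_le : ∀ n, ‖yn n‖ ≤ R := fun n => by
    simpa only [hYeq, LinearIsometry.norm_map] using hR _ (mem_range_self n)
  obtain ⟨a, y, φ, hφ, hy, hΛ⟩ := 𝔖.exists_subseq_tendsto hcl an hyn_le
  have hγXn := (𝔖.continuous_γ.tendsto X).comp (hXn.comp hφ.tendsto_atTop)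
  refine ⟨y, ⟨hX, _, _, fun k => hyn (φ k), hγXn, hy⟩, a, ?_, ?_⟩
  · exact tendsto_nhds_unique (hXn.comp hφ.tendsto_atTop)
      ((hΛ hγXn).congr fun k => (hanX (φ k)).symm)
  · exact tendsto_nhds_unique (hYn.comp hφ.tendsto_atTop)
      ((hΛ hy).congr fun k => (hYeq (φ k)).symm)

theorem Λ_mem_lNormal {D : Set 𝒳} (hDinv : ∀ (s : S), ∀ x ∈ D, 𝔖.act s x ∈ D) {X : H}
    {a : A} (ha : a ∈ 𝔖.AX X) {y : 𝒳} (hy : y ∈ lNormal D (𝔖.γ X)) :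
    𝔖.Λ a y ∈ lNormal (𝔖.γ ⁻¹' D) X := by
  obtain ⟨hX, xn, yn, hF, hxn, hyn⟩ := hy
  have hΛ := (𝔖.Λ a).continuous.tendsto
  refine ⟨hX, _, _, fun n => 𝔖.Λ_mem_fNormal hDinv a (hF n), ?_, (hΛ y).comp hyn⟩
  rw [show X = 𝔖.Λ a (𝔖.γ X) from ha]
  exact (hΛ _).comp hxn

end SDS

theorem limiting_normal_spectral_set_general
    [FiniteDimensional ℝ 𝒳] [FiniteDimensional ℝ H]
    (𝔖 : SDS 𝒳 H S A) (hcl : IsClosed 𝔖.LambdaSet)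
    (D : Set 𝒳) (hDinv : ∀ (s : S), ∀ x ∈ D, 𝔖.act s x ∈ D)
    (X : H) :
    lNormal (𝔖.γ ⁻¹' D) X = {Y | ∃ y ∈ lNormal D (𝔖.γ X), ∃ a ∈ 𝔖.AX X, Y = 𝔖.Λ a y} := by
  ext Y
  exact ⟨𝔖.exists_of_mem_lNormal hcl hDinv,
    fun ⟨_, hy, _, ha, hY⟩ => hY ▸ 𝔖.Λ_mem_lNormal hDinv ha hy⟩

/-- For a nonempty `S`-invariant `D ⊆ 𝒳` and `X ∈ H`:
`N_L(X; γ⁻¹(D)) = {Λ_a y : y ∈ N_L(γ(X); D), a ∈ A_X}`. -/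
theorem limiting_normal_spectral_set
    [FiniteDimensional ℝ 𝒳] [FiniteDimensional ℝ H]
    (𝔖 : SDS 𝒳 H S A) (hcl : IsClosed 𝔖.LambdaSet)
    (D : Set 𝒳) (hD : D.Nonempty) (hDinv : ∀ (s : S), ∀ x ∈ D, 𝔖.act s x ∈ D)
    (X : H) :
    lNormal (𝔖.γ ⁻¹' D) X = {Y | ∃ y ∈ lNormal D (𝔖.γ X), ∃ a ∈ 𝔖.AX X, Y = 𝔖.Λ a y} :=
  limiting_normal_spectral_set_general 𝔖 hcl D hDinv X
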